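/- For every α ∈ (0,1) and every k ∈ ℕ ∪ {0} there exists a constant C_{α,k} > 0 such that for each (x,y) ∈ (0,1)², the norm of the k-th (total) derivative of ψ_α at (x,y) satisfies |D^k ψ_α(x,y)| ≤ C_{α,k} (sin(πx) + sin(πy))^{2−α−k}. -/

import Mathlib

/-!
On the open unit square write `ψ_α = 2^α · sin(πx) · sin(πy) · s^(-α)` with
`s = sin(πx) + sin(πy)`, and call `f` of order `a` if its `m`-th derivative is `O(s^(a - m))`
for every `m`. Orders add under products by the Leibniz rule. Each sine factor has order `1`: it is
at most `s`, and its derivatives are bounded while `s ≤ 2`. By Faà di Bruno, `s^(-α)` has order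
`-α`, since the `i`-th derivative of `t ↦ t^c` is a multiple of `t^(c - i)` and those of `s` are
bounded. Hence `ψ_α` has order `2 - α`.
-/

open Set Real

noncomputable section

/-- The stream function `ψ_α(x,y) = 2^α sin(πx) sin(πy) / (sin(πx) + sin(πy))^α`. -/
def psiα (α : ℝ) : ℝ × ℝ → ℝ := fun p =>
  2 ^ α * (Real.sin (π * p.1) * Real.sin (π * p.2)) /
    (Real.sin (π * p.1) + Real.sin (π * p.2)) ^ α

open scoped ContDiff Nat

theorem rpow_le_rpow_sub_mul_rpow {t M a b : ℝ} (ht : 0 < t) (htM : t ≤ M) (hba : b ≤ a) :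
    t ^ a ≤ M ^ (a - b) * t ^ b := by
  calc t ^ a = t ^ (a - b) * t ^ b := by rw [← rpow_add ht, sub_add_cancel]
    _ ≤ M ^ (a - b) * t ^ b := by gcongr

theorem norm_iteratedFDerivWithin_rpow_const (c : ℝ) (i : ℕ) {t : ℝ} (ht : 0 < t) :
    ‖iteratedFDerivWithin ℝ i (fun t : ℝ => t ^ c) (Ioi 0) t‖ =
      |(descPochhammer ℝ i).eval c| * t ^ (c - i) := by
  rw [norm_iteratedFDerivWithin_eq_norm_iteratedDerivWithin,
    iteratedDerivWithin_eq_iteratedDeriv (uniqueDiffOn_Ioi 0)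
      (contDiffAt_rpow_const_of_ne ht.ne') ht,
    iteratedDeriv_eq_iterate, iter_deriv_rpow_const, norm_mul, Real.norm_eq_abs,
    Real.norm_of_nonneg (rpow_nonneg ht.le _)]

theorem norm_iteratedFDeriv_sin_comp_le {E : Type*} [NormedAddCommGroup E] [NormedSpace ℝ E]
    (L : E →L[ℝ] ℝ) (i : ℕ) (p : E) :
    ‖iteratedFDeriv ℝ i (fun p => sin (L p)) p‖ ≤ ‖L‖ ^ i := by
  rw [show (fun p => sin (L p)) = sin ∘ L from rfl,
    L.iteratedFDeriv_comp_right contDiff_sin p (mod_cast le_top)]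
  calc _ ≤ ‖iteratedFDeriv ℝ i sin (L p)‖ * ∏ _j : Fin i, ‖L‖ :=
        ContinuousMultilinearMap.norm_compContinuousLinearMap_le _ _
    _ ≤ 1 * ‖L‖ ^ i := by
        rw [Finset.prod_const, Finset.card_univ, Fintype.card_fin,
          norm_iteratedFDeriv_eq_norm_iteratedDeriv]
        gcongr
        exact abs_iteratedDeriv_sin_le_one i _
    _ = ‖L‖ ^ i := one_mul _

section RpowDerivBounds

variable {E : Type*} [NormedAddCommGroup E] [NormedSpace ℝ E] {s f g : E → ℝ} {U : Set E}
  {a b M : ℝ}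

def HasRpowDerivBounds (s : E → ℝ) (U : Set E) (a : ℝ) (f : E → ℝ) : Prop :=
  ∀ m : ℕ, ∃ C, ∀ p ∈ U, ‖iteratedFDerivWithin ℝ m f U p‖ ≤ C * s p ^ (a - m)

namespace HasRpowDerivBounds

theorem congr (hf : HasRpowDerivBounds s U a f) (hgf : EqOn g f U) :
    HasRpowDerivBounds s U a g := by
  intro m
  obtain ⟨C, hC⟩ := hf m
  exact ⟨C, fun p hp => by rw [iteratedFDerivWithin_congr hgf hp]; exact hC p hp⟩

theorem const_mul (hU : UniqueDiffOn ℝ U) (hfU : ContDiffOn ℝ ∞ f U)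
    (hf : HasRpowDerivBounds s U a f) (c : ℝ) :
    HasRpowDerivBounds s U a (fun p => c * f p) := by
  intro m
  obtain ⟨C, hC⟩ := hf m
  refine ⟨|c| * C, fun p hp => ?_⟩
  rw [show (fun p => c * f p) = c • f from rfl,
    iteratedFDerivWithin_const_smul_apply ((hfU p hp).of_le (mod_cast le_top)) hU hp,
    norm_smul, Real.norm_eq_abs, mul_assoc]
  gcongr
  exact hC p hp

theorem mul (hU : UniqueDiffOn ℝ U) (hs : ∀ p ∈ U, 0 < s p)
    (hfU : ContDiffOn ℝ ∞ f U) (hgU : ContDiffOn ℝ ∞ g U)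
    (hf : HasRpowDerivBounds s U a f) (hg : HasRpowDerivBounds s U b g) :
    HasRpowDerivBounds s U (a + b) (fun p => f p * g p) := by
  choose Cf hCf using hf
  choose Cg hCg using hg
  intro m
  refine ⟨∑ i ∈ Finset.range (m + 1), m.choose i * (Cf i * Cg (m - i)), fun p hp => ?_⟩
  calc _ ≤ ∑ i ∈ Finset.range (m + 1), (m.choose i : ℝ) * ‖iteratedFDerivWithin ℝ i f U p‖ *
        ‖iteratedFDerivWithin ℝ (m - i) g U p‖ :=
        norm_iteratedFDerivWithin_mul_le hfU hgU hU hp (mod_cast le_top)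
    _ ≤ ∑ i ∈ Finset.range (m + 1), (m.choose i : ℝ) * (Cf i * s p ^ (a - i)) *
        (Cg (m - i) * s p ^ (b - (m - i : ℕ))) := by
        gcongr with i
        · exact mul_nonneg (Nat.cast_nonneg _) ((norm_nonneg _).trans (hCf i p hp))
        · exact hCf i p hp
        · exact hCg (m - i) p hp
    _ = _ := by
        rw [Finset.sum_mul]
        refine Finset.sum_congr rfl fun i hi => ?_
        have hexp : s p ^ (a - i) * s p ^ (b - (m - i : ℕ)) = s p ^ (a + b - m) := by
          rw [← rpow_add (hs p hp), Nat.cast_sub (Finset.mem_range_succ_iff.1 hi)]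
          ring_nf
        rw [← hexp]
        ring

theorem of_bounded (hs : ∀ p ∈ U, 0 < s p) (hsM : ∀ p ∈ U, s p ≤ M)
    (ha : a ≤ 1) (hf : ∃ C, ∀ p ∈ U, |f p| ≤ C * s p ^ a)
    (hDf : ∀ m, 1 ≤ m → ∃ B, ∀ p ∈ U, ‖iteratedFDerivWithin ℝ m f U p‖ ≤ B) :
    HasRpowDerivBounds s U a f := by
  rintro (_ | m)
  · simpa using hf
  obtain ⟨B, hB⟩ := hDf (m + 1) le_add_self
  refine ⟨|B| * M ^ (m + 1 - a : ℝ), fun p hp => ?_⟩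
  have hsa : 1 ≤ M ^ (m + 1 - a : ℝ) * s p ^ (a - (m + 1 : ℕ)) := by
    simpa using rpow_le_rpow_sub_mul_rpow (hs p hp) (hsM p hp)
      (show a - (m + 1 : ℕ) ≤ 0 by push_cast; linarith)
  calc _ ≤ |B| * 1 := by rw [mul_one]; exact (hB p hp).trans (le_abs_self B)
    _ ≤ _ := by rw [mul_assoc]; gcongr

end HasRpowDerivBounds

theorem hasRpowDerivBounds_rpow (hU : IsOpen U) (hsU : ContDiffOn ℝ ∞ s U)
    (hs : ∀ p ∈ U, 0 < s p) (hM : 1 ≤ M) (hsM : ∀ p ∈ U, s p ≤ M) {D : ℝ}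
    (hDs : ∀ i, 1 ≤ i → ∀ p ∈ U, ‖iteratedFDerivWithin ℝ i s U p‖ ≤ D ^ i) (c : ℝ) :
    HasRpowDerivBounds s U c (fun p => s p ^ c) := by
  intro n
  set P := ∑ i ∈ Finset.range (n + 1), |(descPochhammer ℝ i).eval c|
  refine ⟨n ! * (P * M ^ n) * D ^ n, fun p hp => ?_⟩
  have hrpow : ContDiffOn ℝ ∞ (fun t : ℝ => t ^ c) (Ioi 0) :=
    contDiffOn_id.rpow_const_of_ne fun _ ht => ne_of_gt ht
  have hFaa := norm_iteratedFDerivWithin_comp_le (n := n) hrpow hsU (mod_cast le_top)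
    (uniqueDiffOn_Ioi 0) hU.uniqueDiffOn hs hp (C := P * M ^ n * s p ^ (c - n)) ?_
    (fun i hi _ => hDs i hi p hp)
  · exact hFaa.trans_eq (by ring)
  intro i hi
  rw [norm_iteratedFDerivWithin_rpow_const c i (hs p hp)]
  have hP : |(descPochhammer ℝ i).eval c| ≤ P :=
    Finset.single_le_sum (f := fun i => |(descPochhammer ℝ i).eval c|)
      (fun _ _ => abs_nonneg _) (Finset.mem_range_succ_iff.2 hi)
  have hMn : M ^ ((c - i) - (c - n) : ℝ) ≤ M ^ n := by
    rw [← rpow_natCast]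
    exact rpow_le_rpow_of_exponent_le hM (by linarith [(Nat.cast_nonneg i : (0 : ℝ) ≤ i)])
  have hst : 0 ≤ s p ^ (c - n) := rpow_nonneg (hs p hp).le _
  calc _ ≤ P * (M ^ ((c - i) - (c - n) : ℝ) * s p ^ (c - n)) :=
        mul_le_mul hP (rpow_le_rpow_sub_mul_rpow (hs p hp) (hsM p hp) (by gcongr))
          (rpow_nonneg (hs p hp).le _) ((abs_nonneg _).trans hP)
    _ ≤ P * (M ^ n * s p ^ (c - n)) :=
        mul_le_mul_of_nonneg_left (mul_le_mul_of_nonneg_right hMn hst) ((abs_nonneg _).trans hP)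
    _ = _ := by ring

end RpowDerivBounds

def unitSquare : Set (ℝ × ℝ) := Ioo 0 1 ×ˢ Ioo 0 1

def sinSum (p : ℝ × ℝ) : ℝ := sin (π * p.1) + sin (π * p.2)

theorem isOpen_unitSquare : IsOpen unitSquare := isOpen_Ioo.prod isOpen_Ioo

theorem sin_pi_mul_pos {x : ℝ} (hx : x ∈ Ioo (0 : ℝ) 1) : 0 < sin (π * x) :=
  sin_pos_of_pos_of_lt_pi (mul_pos pi_pos hx.1) (mul_lt_of_lt_one_right pi_pos hx.2)

theorem sinSum_pos {p : ℝ × ℝ} (hp : p ∈ unitSquare) : 0 < sinSum p :=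
  add_pos (sin_pi_mul_pos hp.1) (sin_pi_mul_pos hp.2)

theorem sinSum_le_two (p : ℝ × ℝ) : sinSum p ≤ 2 := by
  unfold sinSum; linarith [sin_le_one (π * p.1), sin_le_one (π * p.2)]

theorem contDiff_sinSum : ContDiff ℝ ∞ sinSum := by
  unfold sinSum; fun_prop

open ContinuousLinearMap in
theorem norm_iteratedFDeriv_sinSum_le (i : ℕ) (p : ℝ × ℝ) :
    ‖iteratedFDeriv ℝ i sinSum p‖ ≤ 2 * π ^ i := by
  have hfst : ‖π • fst ℝ ℝ ℝ‖ = π := by simp [norm_smul, pi_pos.le]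
  have hsnd : ‖π • snd ℝ ℝ ℝ‖ = π := by simp [norm_smul, pi_pos.le]
  rw [show sinSum = fun p => sin ((π • fst ℝ ℝ ℝ) p) + sin ((π • snd ℝ ℝ ℝ) p) from rfl,
    fun_iteratedFDeriv_add_apply (by fun_prop) (by fun_prop)]
  calc _ ≤ _ := norm_add_le _ _
    _ ≤ π ^ i + π ^ i := by
        gcongr
        · exact (norm_iteratedFDeriv_sin_comp_le _ i p).trans_eq (by rw [hfst])
        · exact (norm_iteratedFDeriv_sin_comp_le _ i p).trans_eq (by rw [hsnd])
    _ = 2 * π ^ i := by ring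

theorem hasRpowDerivBounds_sin_comp (L : ℝ × ℝ →L[ℝ] ℝ)
    (hL : ∀ p ∈ unitSquare, |sin (L p)| ≤ sinSum p) :
    HasRpowDerivBounds sinSum unitSquare 1 (fun p => sin (L p)) :=
  .of_bounded (fun _ => sinSum_pos) (fun p _ => sinSum_le_two p) le_rfl ⟨1, by simpa using hL⟩
    fun m _ => ⟨‖L‖ ^ m, fun p hp => by
      rw [iteratedFDerivWithin_of_isOpen m isOpen_unitSquare hp]
      exact norm_iteratedFDeriv_sin_comp_le L m p⟩

theorem hasRpowDerivBounds_sinSum_rpow (c : ℝ) :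
    HasRpowDerivBounds sinSum unitSquare c (fun p => sinSum p ^ c) := by
  refine hasRpowDerivBounds_rpow isOpen_unitSquare contDiff_sinSum.contDiffOn
    (fun _ => sinSum_pos) one_le_two (fun p _ => sinSum_le_two p) (D := 2 * π)
    (fun i hi p hp => ?_) c
  rw [iteratedFDerivWithin_of_isOpen i isOpen_unitSquare hp, mul_pow]
  calc _ ≤ 2 * π ^ i := norm_iteratedFDeriv_sinSum_le i p
    _ ≤ 2 ^ i * π ^ i := by gcongr; exact le_self_pow₀ one_le_two (by omega)

theorem psiα_eqOn (α : ℝ) :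
    EqOn (psiα α) (fun p => 2 ^ α * (sin (π * p.1) * (sin (π * p.2) * sinSum p ^ (-α))))
      unitSquare := by
  intro p hp
  simp only [psiα, rpow_neg (sinSum_pos hp).le]
  unfold sinSum
  ring

open ContinuousLinearMap in
theorem hasRpowDerivBounds_psiα (α : ℝ) :
    HasRpowDerivBounds sinSum unitSquare (2 - α) (psiα α) := by
  have hU : UniqueDiffOn ℝ unitSquare := isOpen_unitSquare.uniqueDiffOn
  have hpos : ∀ p ∈ unitSquare, 0 < sinSum p := fun _ => sinSum_pos
  have h₁ : HasRpowDerivBounds sinSum unitSquare 1 (fun p => sin (π * p.1)) :=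
    hasRpowDerivBounds_sin_comp (π • fst ℝ ℝ ℝ) fun p hp => by
      change |sin (π * p.1)| ≤ sinSum p
      rw [abs_of_pos (sin_pi_mul_pos hp.1)]
      unfold sinSum; linarith [sin_pi_mul_pos hp.2]
  have h₂ : HasRpowDerivBounds sinSum unitSquare 1 (fun p => sin (π * p.2)) :=
    hasRpowDerivBounds_sin_comp (π • snd ℝ ℝ ℝ) fun p hp => by
      change |sin (π * p.2)| ≤ sinSum p
      rw [abs_of_pos (sin_pi_mul_pos hp.2)]
      unfold sinSum; linarith [sin_pi_mul_pos hp.1]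
  have hc₁ : ContDiffOn ℝ ∞ (fun p : ℝ × ℝ => sin (π * p.1)) unitSquare := by fun_prop
  have hc₂ : ContDiffOn ℝ ∞ (fun p : ℝ × ℝ => sin (π * p.2)) unitSquare := by fun_prop
  have hcpow : ContDiffOn ℝ ∞ (fun p => sinSum p ^ (-α)) unitSquare :=
    contDiff_sinSum.contDiffOn.rpow_const_of_ne fun p hp => (sinSum_pos hp).ne'
  have h := ((h₁.mul hU hpos hc₁ (hc₂.mul hcpow)
    (h₂.mul hU hpos hc₂ hcpow (hasRpowDerivBounds_sinSum_rpow (-α)))).const_mul hU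
    (hc₁.mul (hc₂.mul hcpow)) (2 ^ α)).congr (psiα_eqOn α)
  convert h using 2
  ring

theorem psiα_derivative_bounds_general (α : ℝ) (k : ℕ) :
    ∃ C : ℝ, 0 < C ∧ ∀ x ∈ Ioo (0:ℝ) 1, ∀ y ∈ Ioo (0:ℝ) 1,
      ‖iteratedFDeriv ℝ k (psiα α) (x, y)‖ ≤
        C * (Real.sin (π * x) + Real.sin (π * y)) ^ ((2:ℝ) - α - k) := by
  obtain ⟨C, hC⟩ := hasRpowDerivBounds_psiα α k
  refine ⟨max C 1, by positivity, fun x hx y hy => ?_⟩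
  have hp : (x, y) ∈ unitSquare := ⟨hx, hy⟩
  rw [← iteratedFDerivWithin_of_isOpen k isOpen_unitSquare hp]
  calc _ ≤ C * sinSum (x, y) ^ (2 - α - k) := hC _ hp
    _ ≤ max C 1 * sinSum (x, y) ^ (2 - α - k) := by
        gcongr
        · exact rpow_nonneg (sinSum_pos hp).le _
        · exact le_max_left C 1

theorem psiα_derivative_bounds (α : ℝ) (hα : α ∈ Ioo (0:ℝ) 1) (k : ℕ) :
    ∃ C : ℝ, 0 < C ∧ ∀ x ∈ Ioo (0:ℝ) 1, ∀ y ∈ Ioo (0:ℝ) 1,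
      ‖iteratedFDeriv ℝ k (psiα α) (x, y)‖ ≤
        C * (Real.sin (π * x) + Real.sin (π * y)) ^ ((2:ℝ) - α - k) :=
  psiα_derivative_bounds_general α k

end
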